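/- Suppose {a^1 >_lex ⋯ >_lex a^n} is a maximal clique of 𝒢(d,α), a^{n+1} ∈ V_{n,d}^α satisfies that (a^n, a^{n+1}) is sorted, and Δ(a^1,a^2) = Δ(a^n, a^{n+1}). Then {a^2 >_lex ⋯ >_lex a^n >_lex a^{n+1}} is also a maximal clique of 𝒢. -/

import Mathlib

/-- The set `V_{n,d}^α` of nonnegative integer tuples with coordinate sum `d`
and coordinatewise bound `α`. -/
def VT (n d : ℕ) (α : Fin n → ℕ) : Set (Fin n → ℕ) :=
  {c | (∑ i, c i) = d ∧ ∀ i, c i ≤ α i}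

/-- `a >_lex b`: the leftmost nonzero entry of `a - b` is positive. -/
def lexGT {n : ℕ} (a b : Fin n → ℕ) : Prop :=
  ∃ i : Fin n, (∀ j, j < i → a j = b j) ∧ b i < a i

/-- `sort(a,b) = (a,b)` for Sturmfels' sorting operator: for every `t`, the prefix
sum of `a` up to `t` equals the ceiling of half the prefix sum of `a + b`. -/
def sortedPair {n : ℕ} (a b : Fin n → ℕ) : Prop :=
  ∀ t : Fin n, 2 * (∑ i ∈ Finset.Iic t, a i)
    = (∑ i ∈ Finset.Iic t, (a i + b i)) + (∑ i ∈ Finset.Iic t, (a i + b i)) % 2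

/-- The sorting signature set `Δ(a,b)` of a sorted pair, recorded (0-indexed) as the
set of positions `t` where the prefix sum of `b` is one less than that of `a`. -/
def sigSet {n : ℕ} (a b : Fin n → ℕ) : Finset (Fin n) :=
  Finset.univ.filter (fun t => (∑ i ∈ Finset.Iic t, b i) + 1 = ∑ i ∈ Finset.Iic t, a i)

/-- Adjacency in the sorting graph `𝒢(d,α)`. -/
def adjG {n : ℕ} (a b : Fin n → ℕ) : Prop :=
  (lexGT a b ∧ sortedPair a b) ∨ (lexGT b a ∧ sortedPair b a)

/-- A clique of the sorting graph `𝒢(d,α)`. -/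
def isClique (n d : ℕ) (α : Fin n → ℕ) (S : Finset (Fin n → ℕ)) : Prop :=
  (↑S ⊆ VT n d α) ∧ ∀ a ∈ S, ∀ b ∈ S, a ≠ b → adjG a b

/-- A maximal clique of the sorting graph `𝒢(d,α)`. -/
def isMaxClique (n d : ℕ) (α : Fin n → ℕ) (S : Finset (Fin n → ℕ)) : Prop :=
  isClique n d α S ∧ ∀ T, isClique n d α T → S ⊆ T → S = T

/-!
Everything is read off prefix sums: `(a, b)` is sorted iff
`prefixSum b ≤ prefixSum a ≤ prefixSum b + 1`, so along the clique `a¹ >_lex ⋯ >_lex aⁿ` the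
prefix sums decrease and spread by at most one. Maximality forces the spread to be exactly one at
each of the `n - 1` interior positions: at a position where `a¹` and `aⁿ` agree, a unit move
would produce a vertex adjacent to the whole clique. The `n - 1` signature sets of consecutive
members are then nonempty, pairwise disjoint subsets of those `n - 1` positions, hence
singletons. With `Δ(aⁿ, a') = Δ(a¹, a²) = {t}`, the prefix sums of `a'` lie one below those of
`a²` and differ from those of `aⁿ` only at `t`. So `a², …, aⁿ, a'` is a clique, and a vertex
adjacent to all of it either lies between `a'` and `aⁿ`, hence is one of them, or extends the
original clique.
-/

open Finset

theorem Nat.exists_transition {p : ℕ → Prop} {i j : ℕ} (hij : i ≤ j) (hi : p i) (hj : ¬ p j) :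
    ∃ k, i ≤ k ∧ k < j ∧ p k ∧ ¬ p (k + 1) := by
  induction j, hij using Nat.le_induction with
  | base => exact absurd hi hj
  | succ j hij ih =>
    by_cases hpj : p j
    · exact ⟨j, hij, j.lt_succ_self, hpj, hj⟩
    · obtain ⟨k, hik, hkj, hk⟩ := ih hpj
      exact ⟨k, hik, by omega, hk⟩

def prefixSum {n : ℕ} (a : Fin n → ℕ) (m : ℕ) : ℕ := ∑ i with i.val < m, a i

section PrefixSum

variable {n : ℕ}

@[simp] theorem prefixSum_zero (a : Fin n → ℕ) : prefixSum a 0 = 0 := by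
  simp [prefixSum]

theorem prefixSum_of_le (a : Fin n → ℕ) {m : ℕ} (h : n ≤ m) : prefixSum a m = ∑ i, a i := by
  rw [prefixSum, filter_true_of_mem fun i _ => by omega]

theorem prefixSum_succ (a : Fin n → ℕ) {m : ℕ} (h : m < n) :
    prefixSum a (m + 1) = prefixSum a m + a ⟨m, h⟩ := by
  have : univ.filter (fun i : Fin n => i.val < m + 1)
      = insert ⟨m, h⟩ (univ.filter fun i : Fin n => i.val < m) := by
    ext i; simp [Fin.ext_iff]; omega
  rw [prefixSum, this, sum_insert (by simp), add_comm, prefixSum]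

theorem sum_Iic_eq_prefixSum (a : Fin n → ℕ) (t : Fin n) :
    ∑ i ∈ Iic t, a i = prefixSum a (t + 1) := by
  rw [prefixSum]; congr 1; ext i; simp

theorem prefixSum_add (a b : Fin n → ℕ) (m : ℕ) :
    prefixSum (a + b) m = prefixSum a m + prefixSum b m :=
  sum_add_distrib

theorem prefixSum_single (i : Fin n) (k m : ℕ) :
    prefixSum (Pi.single i k) m = if i.val < m then k else 0 := by
  simp [prefixSum, sum_pi_single']

theorem prefixSum_congr {a b : Fin n → ℕ} {m : ℕ} (h : ∀ j : Fin n, j.val < m → a j = b j) :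
    prefixSum a m = prefixSum b m :=
  sum_congr rfl fun j hj => h j (by simpa using hj)

theorem prefixSum_eq_of_sum_eq {a b : Fin n → ℕ} (h : ∑ i, a i = ∑ i, b i) {m : ℕ}
    (hm : ¬ (0 < m ∧ m < n)) : prefixSum a m = prefixSum b m := by
  rcases Nat.eq_zero_or_pos m with rfl | hm0
  · simp
  · rw [prefixSum_of_le a (by omega), prefixSum_of_le b (by omega), h]

theorem forall_prefixSum_of_forall_succ {R : ℕ → ℕ → Prop} {a b : Fin n → ℕ} (h0 : R 0 0)
    (h : ∀ t : Fin n, R (prefixSum a (t + 1)) (prefixSum b (t + 1))) (m : ℕ) :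
    R (prefixSum a m) (prefixSum b m) := by
  rcases m with _ | m
  · simpa using h0
  by_cases hm : m < n
  · exact h ⟨m, hm⟩
  rw [prefixSum_of_le a (by omega), prefixSum_of_le b (by omega),
    ← prefixSum_of_le a le_rfl, ← prefixSum_of_le b le_rfl]
  rcases n with _ | n
  · simpa using h0
  · simpa using h (Fin.last n)

theorem forall_prefixSum_of_sum_eq {R : ℕ → ℕ → Prop} {a b : Fin n → ℕ}
    (hsum : ∑ i, a i = ∑ i, b i) (hR : ∀ x, R x x)
    (h : ∀ m, 0 < m → m < n → R (prefixSum a m) (prefixSum b m)) (m : ℕ) :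
    R (prefixSum a m) (prefixSum b m) :=
  if hm : 0 < m ∧ m < n then h m hm.1 hm.2 else prefixSum_eq_of_sum_eq hsum hm ▸ hR _

theorem eq_of_prefixSum_eq {a b : Fin n → ℕ} (h : ∀ m, prefixSum a m = prefixSum b m) :
    a = b := by
  funext i
  have := h (i + 1)
  rwa [prefixSum_succ a i.2, prefixSum_succ b i.2, h i, Nat.add_left_cancel_iff] at this

theorem eq_of_prefixSum_eq_of_sum_eq {a b : Fin n → ℕ} (hsum : ∑ i, a i = ∑ i, b i)
    (h : ∀ m, 0 < m → m < n → prefixSum a m = prefixSum b m) : a = b :=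
  eq_of_prefixSum_eq (forall_prefixSum_of_sum_eq hsum (fun _ => rfl) h)

end PrefixSum

section Lex

variable {n : ℕ} {a b c : Fin n → ℕ}

theorem lexGT_iff_toLex_lt : lexGT a b ↔ toLex b < toLex a :=
  ⟨fun ⟨i, h, hi⟩ => ⟨i, fun j hj => (h j hj).symm, hi⟩,
    fun ⟨i, h, hi⟩ => ⟨i, fun j hj => (h j hj).symm, hi⟩⟩

theorem lexGT.trans (hab : lexGT a b) (hbc : lexGT b c) : lexGT a c :=
  lexGT_iff_toLex_lt.2 ((lexGT_iff_toLex_lt.1 hbc).trans (lexGT_iff_toLex_lt.1 hab))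

theorem lexGT.ne (h : lexGT a b) : a ≠ b := by
  rintro rfl; exact lt_irrefl _ (lexGT_iff_toLex_lt.1 h)

theorem lexGT.exists_prefixSum_lt (h : lexGT a b) : ∃ m, prefixSum b m < prefixSum a m := by
  obtain ⟨i, hbefore, hi⟩ := h
  refine ⟨i + 1, ?_⟩
  rw [prefixSum_succ a i.2, prefixSum_succ b i.2,
    prefixSum_congr fun j hj => hbefore j (Fin.lt_def.2 hj)]
  exact Nat.add_lt_add_left hi _

theorem lexGT_of_prefixSum_le (h : ∀ m, prefixSum b m ≤ prefixSum a m) (hne : a ≠ b) :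
    lexGT a b := by
  refine lexGT_iff_toLex_lt.2 (lt_of_le_of_ne (not_lt.1 fun hlt => ?_) (by simpa using hne.symm))
  obtain ⟨m, hm⟩ := (lexGT_iff_toLex_lt.2 hlt).exists_prefixSum_lt
  exact (h m).not_gt hm

end Lex

section Sorted

variable {n : ℕ} {a b : Fin n → ℕ}

theorem sortedPair_iff :
    sortedPair a b ↔ ∀ m, prefixSum b m ≤ prefixSum a m ∧ prefixSum a m ≤ prefixSum b m + 1 := by
  simp only [sortedPair, sum_add_distrib, sum_Iic_eq_prefixSum]
  refine ⟨fun h => forall_prefixSum_of_forall_succ (R := fun x y => y ≤ x ∧ x ≤ y + 1)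
    (by simp) fun t => by have := h t; omega, fun h t => by have := h (t + 1); omega⟩

theorem sortedPair_of_sum_eq (hsum : ∑ i, a i = ∑ i, b i)
    (h : ∀ m, 0 < m → m < n → prefixSum b m ≤ prefixSum a m ∧ prefixSum a m ≤ prefixSum b m + 1) :
    sortedPair a b :=
  sortedPair_iff.2 (forall_prefixSum_of_sum_eq (R := fun x y => y ≤ x ∧ x ≤ y + 1) hsum
    (fun x => ⟨le_rfl, x.le_succ⟩) h)

theorem prefixSum_le_of_sortedPair_chain {ι : Type*} [PartialOrder ι] {B : ι → Fin n → ℕ}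
    (hchain : ∀ i j, i < j → sortedPair (B i) (B j)) {i j : ι} (hij : i ≤ j) (m : ℕ) :
    prefixSum (B j) m ≤ prefixSum (B i) m := by
  rcases hij.eq_or_lt with rfl | h
  · exact le_rfl
  · exact (sortedPair_iff.1 (hchain i j h) m).1

theorem sortedPair.not_lexGT (h : sortedPair a b) : ¬ lexGT b a := fun hlex => by
  obtain ⟨m, hm⟩ := hlex.exists_prefixSum_lt
  exact ((sortedPair_iff.1 h m).1).not_gt hm

theorem adjG.symm (h : adjG a b) : adjG b a := Or.symm h

theorem adjG_of_prefixSum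
    (h : ∀ m, prefixSum b m ≤ prefixSum a m ∧ prefixSum a m ≤ prefixSum b m + 1) (hne : a ≠ b) :
    adjG a b :=
  Or.inl ⟨lexGT_of_prefixSum_le (fun m => (h m).1) hne, sortedPair_iff.2 h⟩

theorem adjG.prefixSum_cases (h : adjG a b) :
    (∀ m, prefixSum b m ≤ prefixSum a m ∧ prefixSum a m ≤ prefixSum b m + 1) ∨
      (∀ m, prefixSum a m ≤ prefixSum b m ∧ prefixSum b m ≤ prefixSum a m + 1) :=
  h.imp (fun h => sortedPair_iff.1 h.2) (fun h => sortedPair_iff.1 h.2)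

theorem mem_sigSet {t : Fin n} :
    t ∈ sigSet a b ↔ prefixSum b (t + 1) + 1 = prefixSum a (t + 1) := by
  simp [sigSet, sum_Iic_eq_prefixSum]

theorem sigSet_nonempty (h : sortedPair a b) (hne : a ≠ b) : (sigSet a b).Nonempty := by
  by_contra hempty
  refine hne (eq_of_prefixSum_eq (forall_prefixSum_of_forall_succ rfl fun t => ?_))
  have hsand := sortedPair_iff.1 h (t + 1)
  have ht : t ∉ sigSet a b := fun ht => hempty ⟨t, ht⟩
  rw [mem_sigSet] at ht
  omega

end Sorted

section Clique

variable {n d : ℕ} {α : Fin n → ℕ}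

theorem isClique_insert {S : Finset (Fin n → ℕ)} {b : Fin n → ℕ} (hS : isClique n d α S)
    (hb : b ∈ VT n d α) (hadj : ∀ x ∈ S, x ≠ b → adjG x b) : isClique n d α (insert b S) := by
  refine ⟨by simpa [Set.insert_subset_iff] using ⟨hb, hS.1⟩, fun x hx y hy hxy => ?_⟩
  rw [mem_insert] at hx hy
  rcases hx with rfl | hx <;> rcases hy with rfl | hy
  · exact absurd rfl hxy
  · exact (hadj y hy (Ne.symm hxy)).symm
  · exact hadj x hx hxy
  · exact hS.2 x hx y hy hxy

theorem isMaxClique_iff {S : Finset (Fin n → ℕ)} :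
    isMaxClique n d α S ↔ isClique n d α S ∧
      ∀ b ∈ VT n d α, (∀ x ∈ S, x ≠ b → adjG x b) → b ∈ S := by
  refine ⟨fun h => ⟨h.1, fun b hb hadj => ?_⟩, fun h => ⟨h.1, fun T hT hST => ?_⟩⟩
  · rw [h.2 _ (isClique_insert h.1 hb hadj) (subset_insert b S)]
    exact mem_insert_self b S
  · refine hST.antisymm fun b hb => h.2 b (hT.1 hb) fun x hx hxb => hT.2 x (hST hx) b hb hxb

theorem isMaxClique.mem_of_forall_adjG {S : Finset (Fin n → ℕ)} (hS : isMaxClique n d α S)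
    {b : Fin n → ℕ} (hb : b ∈ VT n d α) (hadj : ∀ x ∈ S, x ≠ b → adjG x b) : b ∈ S :=
  (isMaxClique_iff.1 hS).2 b hb hadj

theorem isClique_image {ι : Type*} [LinearOrder ι] [Fintype ι] {B : ι → Fin n → ℕ}
    (hV : ∀ i, B i ∈ VT n d α) (hlex : ∀ i j, i < j → lexGT (B i) (B j))
    (hsorted : ∀ i j, i < j → sortedPair (B i) (B j)) : isClique n d α (image B univ) := by
  refine ⟨by simpa [Set.range_subset_iff] using hV, ?_⟩
  simp only [mem_image, mem_univ, true_and, forall_exists_index, forall_apply_eq_imp_iff]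
  intro i j hij
  rcases lt_trichotomy i j with h | rfl | h
  · exact Or.inl ⟨hlex i j h, hsorted i j h⟩
  · exact absurd rfl hij
  · exact Or.inr ⟨hlex j i h, hsorted j i h⟩

theorem sortedPair_of_isClique_image {ι : Type*} [Fintype ι] [LT ι] {B : ι → Fin n → ℕ}
    (hS : isClique n d α (image B univ)) (hlex : ∀ i j, i < j → lexGT (B i) (B j))
    {i j : ι} (hij : i < j) : sortedPair (B i) (B j) :=
  (hS.2 _ (mem_image_of_mem B (mem_univ i)) _ (mem_image_of_mem B (mem_univ j))
    (hlex i j hij).ne).resolve_right (fun h => h.2.not_lexGT (hlex i j hij)) |>.2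

end Clique

section Moves

variable {n d : ℕ} {α : Fin n → ℕ}

theorem exists_move_unit {x : Fin n → ℕ} (hx : x ∈ VT n d α) {i j : Fin n} (hij : i ≠ j)
    (hi : 1 ≤ x i) (hj : x j < α j) :
    ∃ c ∈ VT n d α, ∀ m, prefixSum c m + (if i.val < m then 1 else 0)
      = prefixSum x m + (if j.val < m then 1 else 0) := by
  set c := x + Pi.single j 1 - Pi.single i 1
  have hc : c + Pi.single i 1 = x + Pi.single j 1 := by
    refine tsub_add_cancel_of_le fun k => ?_
    by_cases hk : k = i
    · subst hk; simpa [Pi.single_apply, hij] using hi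
    · simp [Pi.single_apply, hk]
  have hP : ∀ m, prefixSum c m + (if i.val < m then 1 else 0)
      = prefixSum x m + (if j.val < m then 1 else 0) := fun m => by
    rw [← prefixSum_single, ← prefixSum_single, ← prefixSum_add, ← prefixSum_add, hc]
  refine ⟨c, ⟨?_, fun k => ?_⟩, hP⟩
  · have := hP n
    rw [prefixSum_of_le c le_rfl, prefixSum_of_le x le_rfl, if_pos i.2, if_pos j.2, hx.1] at this
    omega
  · have := hx.2 k
    by_cases hk : k = j
    · subst hk; simp [c, Ne.symm hij]; omega
    · simp only [c, Pi.sub_apply, Pi.add_apply, Pi.single_apply, hk, if_false]; omega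

/-- The two alternatives allow moving a unit of `z` from `p` to `q`, or a unit of `a` from `q`
to `p`, within the bounds `α`. -/
theorem exists_adjacent_move {a z : Fin n → ℕ} (ha : ∀ i, a i ≤ α i) (hz : ∀ i, z i ≤ α i)
    (hα : ∀ i, 1 ≤ α i)
    (hsand : ∀ m, prefixSum z m ≤ prefixSum a m ∧ prefixSum a m ≤ prefixSum z m + 1)
    (hsum : ∑ i, a i = ∑ i, z i) (hne : a ≠ z) {m₀ : ℕ} (h0 : 0 < m₀) (hn : m₀ < n)
    (hfree : prefixSum a m₀ = prefixSum z m₀) :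
    ∃ p q : Fin n, q.val = p.val + 1 ∧ prefixSum a q = prefixSum z q ∧
      ((1 ≤ z p ∧ z q < α q) ∨ (1 ≤ a q ∧ a p < α p)) := by
  obtain ⟨m₁, h1, h1n, hm₁⟩ : ∃ m₁, 0 < m₁ ∧ m₁ < n ∧ prefixSum a m₁ ≠ prefixSum z m₁ := by
    by_contra! h
    exact hne (eq_of_prefixSum_eq_of_sum_eq hsum h)
  rcases lt_or_gt_of_ne (show m₁ ≠ m₀ by rintro rfl; exact hm₁ hfree) with h | h
  · -- the last jump down of `prefixSum a - prefixSum z` before `m₀`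
    obtain ⟨k, -, hk, hkne, hkeq⟩ :=
      Nat.exists_transition (p := fun m => prefixSum a m ≠ prefixSum z m) h.le hm₁ (not_not.2 hfree)
    simp only [not_not] at hkne hkeq
    have e₁ := prefixSum_succ a (show k < n by omega)
    have e₂ := prefixSum_succ z (show k < n by omega)
    have e₃ := prefixSum_succ a (show k + 1 < n by omega)
    have e₄ := prefixSum_succ z (show k + 1 < n by omega)
    have := hsand k; have := hsand (k + 1 + 1); have := hz ⟨k, by omega⟩
    refine ⟨⟨k, by omega⟩, ⟨k + 1, by omega⟩, rfl, hkeq, ?_⟩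
    by_cases hzq : z ⟨k + 1, by omega⟩ < α ⟨k + 1, by omega⟩
    · exact Or.inl ⟨by omega, hzq⟩
    · have := hα ⟨k + 1, by omega⟩
      exact Or.inr ⟨by omega, by omega⟩
  · -- the first jump up of `prefixSum a - prefixSum z` after `m₀`
    obtain ⟨k, hk₀, hk, hkeq, hkne⟩ :=
      Nat.exists_transition (p := fun m => prefixSum a m = prefixSum z m) h.le hfree hm₁
    have e₁ := prefixSum_succ a (show k < n by omega)
    have e₂ := prefixSum_succ z (show k < n by omega)
    have e₃ := prefixSum_succ a (show k - 1 < n by omega)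
    have e₄ := prefixSum_succ z (show k - 1 < n by omega)
    rw [Nat.sub_add_cancel (by omega)] at e₃ e₄
    have := hsand (k + 1); have := hsand (k - 1); have := ha ⟨k, by omega⟩
    refine ⟨⟨k - 1, by omega⟩, ⟨k, by omega⟩, by simp; omega, hkeq, ?_⟩
    by_cases hzp : 1 ≤ z ⟨k - 1, by omega⟩
    · exact Or.inl ⟨hzp, by omega⟩
    · have := hα ⟨k - 1, by omega⟩
      exact Or.inr ⟨by omega, by omega⟩

end Moves

section MaxClique

variable {n d : ℕ} {α : Fin n → ℕ}

/-- At an interior position where `a` and `z` agree, a unit move given by `exists_adjacent_move`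
would produce a vertex adjacent to the whole clique. -/
theorem prefixSum_eq_add_one_of_isMaxClique {S : Finset (Fin n → ℕ)} (hS : isMaxClique n d α S)
    (hα : ∀ i, 1 ≤ α i) {a z : Fin n → ℕ} (ha : a ∈ S) (hz : z ∈ S) (hne : a ≠ z)
    (hbetween : ∀ x ∈ S, ∀ m, prefixSum z m ≤ prefixSum x m ∧ prefixSum x m ≤ prefixSum a m)
    (haz : ∀ m, prefixSum a m ≤ prefixSum z m + 1) {m : ℕ} (hm0 : 0 < m) (hmn : m < n) :
    prefixSum a m = prefixSum z m + 1 := by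
  have haV := hS.1.1 ha
  have hzV := hS.1.1 hz
  by_contra hm
  obtain ⟨p, q, hpq, hfree, hmove⟩ := exists_adjacent_move haV.2 hzV.2 hα
    (fun m => ⟨(hbetween a ha m).1, haz m⟩) (haV.1.trans hzV.1.symm) hne hm0 hmn
    (by have := (hbetween a ha m).1; have := haz m; omega)
  have hqp : p ≠ q := by rintro rfl; omega
  have hfree' : ∀ m', m' ≠ q.val ∨ prefixSum a m' = prefixSum z m' := fun m' => by
    rcases eq_or_ne m' q with rfl | h
    · exact Or.inr hfree
    · exact Or.inl h
  rcases hmove with ⟨hz1, hzα⟩ | ⟨ha1, haα⟩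
  · obtain ⟨c, hcV, hc⟩ := exists_move_unit hzV hqp hz1 hzα
    have hcS : c ∈ S := hS.mem_of_forall_adjG hcV fun x hx hxc =>
      adjG_of_prefixSum (fun m' => by
        have hcm := hc m'; have := hbetween x hx m'; have := haz m'; have := hfree' m'
        split_ifs at hcm <;> omega) hxc
    have hcq := hc q
    rw [if_pos (show p.val < q.val by omega), if_neg (lt_irrefl _)] at hcq
    have := (hbetween c hcS q).1
    omega
  · obtain ⟨c, hcV, hc⟩ := exists_move_unit haV hqp.symm ha1 haα
    have hcS : c ∈ S := hS.mem_of_forall_adjG hcV fun x hx hxc =>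
      (adjG_of_prefixSum (fun m' => by
        have hcm := hc m'; have := hbetween x hx m'; have := haz m'; have := hfree' m'
        split_ifs at hcm <;> omega) (Ne.symm hxc)).symm
    have hcq := hc q
    rw [if_neg (lt_irrefl _), if_pos (show p.val < q.val by omega)] at hcq
    have := (hbetween c hcS q).2
    omega

end MaxClique

section Counting

variable {n : ℕ}

/-- The summands are the cards of pairwise disjoint subsets of the right-hand side. -/
theorem sum_card_sigSet_le_card_sigSet {k : ℕ} (B : Fin (k + 1) → Fin n → ℕ)
    (hanti : ∀ i j, i ≤ j → ∀ m, prefixSum (B j) m ≤ prefixSum (B i) m)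
    (hspan : ∀ m, prefixSum (B 0) m ≤ prefixSum (B (Fin.last k)) m + 1) :
    ∑ i : Fin k, #(sigSet (B i.castSucc) (B i.succ)) ≤ #(sigSet (B 0) (B (Fin.last k))) := by
  rw [← card_biUnion]
  · refine card_le_card fun t ht => ?_
    obtain ⟨i, -, hi⟩ := mem_biUnion.1 ht
    rw [mem_sigSet] at hi ⊢
    have := hanti 0 i.castSucc (Fin.zero_le _) (t + 1)
    have := hanti i.succ (Fin.last k) (Fin.le_last _) (t + 1)
    have := hspan (t + 1)
    omega
  · have key : ∀ i j : Fin k, i < j → ∀ t, t ∈ sigSet (B i.castSucc) (B i.succ) →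
        t ∉ sigSet (B j.castSucc) (B j.succ) := by
      intro i j hlt t hti htj
      rw [mem_sigSet] at hti htj
      have := hanti 0 i.castSucc (Fin.zero_le _) (t + 1)
      have := hanti i.succ j.castSucc (Fin.succ_le_castSucc_iff.2 hlt) (t + 1)
      have := hanti j.succ (Fin.last k) (Fin.le_last _) (t + 1)
      have := hspan (t + 1)
      omega
    rintro i - j - hij
    refine disjoint_left.2 fun t hti htj => ?_
    rcases lt_or_gt_of_ne hij with h | h
    · exact key i j h t hti htj
    · exact key j i h t htj hti

/-- These are `k` nonempty pairwise disjoint subsets of the `k` positions before the last. -/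
theorem card_sigSet_castSucc_succ {k d : ℕ} (B : Fin (k + 1) → Fin (k + 1) → ℕ)
    (hsum : ∀ i, ∑ j, B i j = d) (hchain : ∀ i j, i < j → sortedPair (B i) (B j))
    (hinj : ∀ i j, i < j → B i ≠ B j) (i : Fin k) :
    #(sigSet (B i.castSucc) (B i.succ)) = 1 := by
  have hanti : ∀ i j, i ≤ j → ∀ m, prefixSum (B j) m ≤ prefixSum (B i) m := fun _ _ =>
    prefixSum_le_of_sortedPair_chain hchain
  have hlast : (0 : Fin (k + 1)) < Fin.last k := by have := i.isLt; simp [Fin.lt_def]; omega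
  have hlast_mem : Fin.last k ∉ sigSet (B 0) (B (Fin.last k)) := by
    rw [mem_sigSet, prefixSum_of_le _ (by simp), prefixSum_of_le _ (by simp), hsum, hsum]
    omega
  have hbound : ∑ i : Fin k, #(sigSet (B i.castSucc) (B i.succ)) ≤ ∑ _i : Fin k, 1 := by
    have := card_lt_univ_of_notMem hlast_mem
    have := sum_card_sigSet_le_card_sigSet B hanti fun m =>
      (sortedPair_iff.1 (hchain 0 _ hlast) m).2
    simp only [Fintype.card_fin, sum_const, card_univ, smul_eq_mul, mul_one] at *
    omega
  have hpos : ∀ i : Fin k, 1 ≤ #(sigSet (B i.castSucc) (B i.succ)) := fun i =>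
    card_pos.2 (sigSet_nonempty (hchain _ _ i.castSucc_lt_succ) (hinj _ _ i.castSucc_lt_succ))
  exact ((sum_eq_sum_iff_of_le fun i _ => hpos i).1
    (le_antisymm (sum_le_sum fun i _ => hpos i) hbound) i (mem_univ i)).symm

end Counting

section Shift

variable {n d : ℕ} {α : Fin n → ℕ}

theorem prefixSum_of_sigSet_eq {a₀ a₁ z a' : Fin n → ℕ} {t : Fin n}
    (h0z : ∀ m, 0 < m → m < n → prefixSum a₀ m = prefixSum z m + 1)
    (h01 : sortedPair a₀ a₁) (hza' : sortedPair z a')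
    (ht : sigSet a₀ a₁ = {t}) (hΔ : sigSet a₀ a₁ = sigSet z a') {m : ℕ} (hm0 : 0 < m)
    (hmn : m < n) :
    prefixSum a' m + 1 = prefixSum a₁ m ∧
      prefixSum z m = prefixSum a' m + if m = t.val + 1 then 1 else 0 := by
  have h₁ := Finset.ext_iff.1 ht ⟨m - 1, by omega⟩
  have h₂ := Finset.ext_iff.1 hΔ ⟨m - 1, by omega⟩
  rw [mem_sigSet, mem_singleton] at h₁
  rw [ht, mem_singleton, mem_sigSet] at h₂
  simp only [Fin.ext_iff, Nat.sub_add_cancel hm0] at h₁ h₂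
  have := h0z m hm0 hmn
  have := sortedPair_iff.1 h01 m
  have := sortedPair_iff.1 hza' m
  by_cases hmt : m = t.val + 1
  · have := h₁.2 (by omega)
    have := h₂.1 (by omega)
    rw [if_pos hmt]
    omega
  · have := mt h₁.1 (by omega)
    have := mt h₂.2 (by omega)
    rw [if_neg hmt]
    omega

def appendShift {X : Type*} (A : Fin n → X) (a' : X) (i : Fin n) : X :=
  if h : i.val + 1 < n then A ⟨i.val + 1, h⟩ else a'

theorem appendShift_rel {X : Type*} {R : X → X → Prop} {A : Fin n → X} {a' : X}
    (hA : ∀ i j, i < j → R (A i) (A j)) (ha' : ∀ i : Fin n, 0 < i.val → R (A i) a')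
    {i j : Fin n} (hij : i < j) : R (appendShift A a' i) (appendShift A a' j) := by
  have hi : i.val + 1 < n := by have := j.isLt; rw [Fin.lt_def] at hij; omega
  rw [appendShift, dif_pos hi, appendShift]
  split_ifs with hj
  · exact hA _ _ (by rw [Fin.mk_lt_mk]; exact Nat.succ_lt_succ hij)
  · exact ha' _ (Nat.succ_pos _)

theorem mem_image_appendShift {X : Type*} [DecidableEq X] {A : Fin n → X} {a' x : X}
    (hn : 0 < n) :
    x ∈ image (appendShift A a') univ ↔ x = a' ∨ ∃ i : Fin n, 0 < i.val ∧ A i = x := by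
  simp only [mem_image, mem_univ, true_and]
  constructor
  · rintro ⟨i, rfl⟩
    unfold appendShift
    split_ifs
    · exact Or.inr ⟨_, Nat.succ_pos _, rfl⟩
    · exact Or.inl rfl
  · rintro (rfl | ⟨i, hi, rfl⟩)
    · exact ⟨⟨n - 1, by omega⟩, by simp [appendShift]; omega⟩
    · refine ⟨⟨i - 1, by omega⟩, ?_⟩
      rw [appendShift, dif_pos (by simp; omega)]
      exact congrArg A (Fin.ext (by simp; omega))

/-- A vertex adjacent to all of `S'` lies between `a'` and `a₁`. Below `z` it is `a'` or `z`,
whose prefix sums differ only at `t + 1`; above `z` it is adjacent to `a₀` as well, so it lies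
in `S`. -/
theorem mem_of_forall_adjG_of_shift {S S' : Finset (Fin n → ℕ)} (hS : isMaxClique n d α S)
    (hS'V : ↑S' ⊆ VT n d α) {a₀ a₁ z a' : Fin n → ℕ} {t : Fin n}
    (hsub : ∀ x ∈ S, x ≠ a₀ → x ∈ S') (ha₁ : a₁ ∈ S') (hz : z ∈ S') (ha' : a' ∈ S')
    (h01 : a₀ ≠ a₁) (h01le : ∀ m, prefixSum a₁ m ≤ prefixSum a₀ m)
    (h0z : ∀ m, 0 < m → m < n → prefixSum a₀ m = prefixSum z m + 1)
    (h1a' : ∀ m, 0 < m → m < n → prefixSum a' m + 1 = prefixSum a₁ m)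
    (hza' : ∀ m, 0 < m → m < n →
      prefixSum z m = prefixSum a' m + if m = t.val + 1 then 1 else 0)
    {b : Fin n → ℕ} (hb : b ∈ VT n d α) (hadj : ∀ x ∈ S', x ≠ b → adjG x b) : b ∈ S' := by
  by_contra hbS'
  have adj : ∀ x ∈ S', adjG x b := fun x hx => hadj x hx (by rintro rfl; exact hbS' hx)
  have hsum : ∀ x ∈ VT n d α, ∑ i, x i = ∑ i, b i := fun x hx => hx.1.trans hb.1.symm
  have hsumS' : ∀ x ∈ S', ∑ i, x i = ∑ i, b i := fun x hx => hsum x (hS'V hx)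
  have hlow : ∀ m, 0 < m → m < n →
      prefixSum a' m ≤ prefixSum b m ∧ prefixSum b m ≤ prefixSum a' m + 1 := by
    intro m hm0 hmn
    have := h1a' m hm0 hmn
    rcases (adj a₁ ha₁).prefixSum_cases with h | h <;> have := h m <;>
      rcases (adj a' ha').prefixSum_cases with h' | h' <;> have := h' m <;> omega
  rcases (adj z hz).prefixSum_cases with hbz | hbz
  · by_cases hbt : prefixSum b (t.val + 1) = prefixSum a' (t.val + 1)
    · refine hbS' (eq_of_prefixSum_eq_of_sum_eq (hsumS' a' ha') (fun m hm0 hmn => ?_) ▸ ha')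
      have := hlow m hm0 hmn; have := hbz m; have := hza' m hm0 hmn
      split_ifs at this with hmt
      · subst hmt; omega
      · omega
    · refine hbS' (eq_of_prefixSum_eq_of_sum_eq (hsumS' z hz) (fun m hm0 hmn => ?_) ▸ hz)
      have := hlow m hm0 hmn; have := hbz m; have := hza' m hm0 hmn
      split_ifs at this with hmt
      · subst hmt; omega
      · omega
  · have hbS : b ∈ S := hS.mem_of_forall_adjG hb fun x hx hxb => by
      by_cases hx0 : x = a₀
      · subst hx0
        refine adjG_of_prefixSum (forall_prefixSum_of_sum_eq (R := fun x y => y ≤ x ∧ x ≤ y + 1)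
          (hsum x (hS.1.1 hx)) (fun x => ⟨le_rfl, x.le_succ⟩) fun m hm0 hmn => ?_) hxb
        have := hlow m hm0 hmn; have := hbz m; have := hza' m hm0 hmn; have := h0z m hm0 hmn
        split_ifs at * <;> omega
      · exact adj x (hsub x hx hx0)
    obtain rfl : b = a₀ := by_contra fun h => hbS' (hsub b hbS h)
    exact h01 (eq_of_prefixSum_eq_of_sum_eq (hsumS' a₁ ha₁).symm fun m hm0 hmn => by
      have := hlow m hm0 hmn; have := h1a' m hm0 hmn; have := h01le m; omega)

end Shift

theorem isMaxClique_appendShift {n d : ℕ} {α : Fin n → ℕ} (h1 : 1 < n) {A : Fin n → Fin n → ℕ}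
    {a' : Fin n → ℕ} {t : Fin n} (hdec : ∀ i j : Fin n, i < j → lexGT (A i) (A j))
    (hmax : isMaxClique n d α (image A univ)) (ha' : a' ∈ VT n d α)
    (hlast : lexGT (A ⟨n - 1, by omega⟩) a') (hsort : sortedPair (A ⟨n - 1, by omega⟩) a')
    (hcover : ∀ m, 0 < m → m < n →
      prefixSum (A ⟨0, by omega⟩) m = prefixSum (A ⟨n - 1, by omega⟩) m + 1)
    (ht : sigSet (A ⟨0, by omega⟩) (A ⟨1, h1⟩) = {t})
    (hΔ : sigSet (A ⟨0, by omega⟩) (A ⟨1, h1⟩) = sigSet (A ⟨n - 1, by omega⟩) a') :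
    (∀ i j : Fin n, i < j → lexGT (appendShift A a' i) (appendShift A a' j)) ∧
      isMaxClique n d α (image (appendShift A a') univ) := by
  have hmem : ∀ i, A i ∈ image A univ := fun i => mem_image_of_mem A (mem_univ i)
  have hV : ∀ i, A i ∈ VT n d α := fun i => hmax.1.1 (hmem i)
  have hchain : ∀ i j, i < j → sortedPair (A i) (A j) := fun i j =>
    sortedPair_of_isClique_image hmax.1 hdec
  have hle := fun {i j} => prefixSum_le_of_sortedPair_chain (i := i) (j := j) hchain
  have hle_last : ∀ i : Fin n, i ≤ ⟨n - 1, by omega⟩ := fun i =>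
    Fin.le_def.2 (Nat.le_sub_one_of_lt i.2)
  have hshift := fun {m} =>
    prefixSum_of_sigSet_eq (m := m) hcover (hchain _ _ (Fin.mk_lt_mk.2 one_pos)) hsort ht hΔ
  have hlex : ∀ i j : Fin n, i < j → lexGT (appendShift A a' i) (appendShift A a' j) :=
    fun i j => appendShift_rel hdec fun i _ => by
      rcases (hle_last i).lt_or_eq with h | rfl
      · exact (hdec _ _ h).trans hlast
      · exact hlast
  have hsorted : ∀ i j : Fin n, i < j → sortedPair (appendShift A a' i) (appendShift A a' j) :=
    fun i j => appendShift_rel hchain fun i hi =>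
      sortedPair_of_sum_eq ((hV i).1.trans ha'.1.symm) fun m hm0 hmn => by
        have := (hshift hm0 hmn).1
        have := (sortedPair_iff.1 hsort m).1
        have := hle (hle_last i) m
        have := hle (i := ⟨1, h1⟩) (Fin.le_def.2 hi) m
        omega
  have hV' : ∀ i, appendShift A a' i ∈ VT n d α := fun i => by
    unfold appendShift; split_ifs; exacts [hV _, ha']
  have hclique := isClique_image hV' hlex hsorted
  have hmem' := fun {x} => mem_image_appendShift (A := A) (a' := a') (x := x) (by omega)
  refine ⟨hlex, isMaxClique_iff.2 ⟨hclique, fun b hb hadj => ?_⟩⟩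
  refine mem_of_forall_adjG_of_shift hmax hclique.1 ?_ (hmem'.2 (Or.inr ⟨_, one_pos, rfl⟩))
    (hmem'.2 (Or.inr ⟨⟨n - 1, by omega⟩, by simp; omega, rfl⟩)) (hmem'.2 (Or.inl rfl))
    (hdec _ _ (Fin.mk_lt_mk.2 one_pos)).ne (hle (Fin.mk_le_mk.2 (Nat.zero_le _))) hcover
    (fun _ hm0 hmn => (hshift hm0 hmn).1) (fun _ hm0 hmn => (hshift hm0 hmn).2) hb hadj
  rintro x hx hx0
  obtain ⟨i, -, rfl⟩ := mem_image.1 hx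
  exact hmem'.2 (Or.inr ⟨i, Nat.pos_of_ne_zero fun h => hx0 (congrArg A (Fin.ext h)), rfl⟩)

/-- If `a^1 >_lex ⋯ >_lex a^n` is a maximal clique, `a^{n+1} ∈ V_{n,d}^α` with
`(a^n, a^{n+1})` sorted and `Δ(a^1,a^2) = Δ(a^n,a^{n+1})`, then
`a^2 >_lex ⋯ >_lex a^n >_lex a^{n+1}` is also a maximal clique. -/
theorem stmt8 (n d : ℕ) (hn : 3 ≤ n) (α : Fin n → ℕ)
    (hα0 : 1 ≤ α ⟨0, by omega⟩) (hmono : Monotone α)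
    (A : Fin n → (Fin n → ℕ))
    (hdec : ∀ i j : Fin n, i < j → lexGT (A i) (A j))
    (hmax : isMaxClique n d α (Finset.image A Finset.univ))
    (a' : Fin n → ℕ) (ha' : a' ∈ VT n d α)
    (hlast : lexGT (A ⟨n - 1, by omega⟩) a')
    (hsort : sortedPair (A ⟨n - 1, by omega⟩) a')
    (hΔ : sigSet (A ⟨0, by omega⟩) (A ⟨1, by omega⟩)
      = sigSet (A ⟨n - 1, by omega⟩) a') :
    (∀ i j : Fin n, i < j →
      lexGT ((fun i : Fin n => if h : i.1 + 1 < n then A ⟨i.1 + 1, h⟩ else a') i)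
        ((fun i : Fin n => if h : i.1 + 1 < n then A ⟨i.1 + 1, h⟩ else a') j)) ∧
    isMaxClique n d α
      (Finset.image (fun i : Fin n => if h : i.1 + 1 < n then A ⟨i.1 + 1, h⟩ else a')
        Finset.univ) := by
  have hα : ∀ i, 1 ≤ α i := fun i => hα0.trans (hmono (Fin.le_def.2 (Nat.zero_le _)))
  have hmem : ∀ i, A i ∈ image A univ := fun i => mem_image_of_mem A (mem_univ i)
  have hchain : ∀ i j, i < j → sortedPair (A i) (A j) := fun i j =>
    sortedPair_of_isClique_image hmax.1 hdec
  have hcover : ∀ m, 0 < m → m < n →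
      prefixSum (A ⟨0, by omega⟩) m = prefixSum (A ⟨n - 1, by omega⟩) m + 1 :=
    fun m => prefixSum_eq_add_one_of_isMaxClique hmax hα (hmem _) (hmem _)
      (hdec _ _ (Fin.mk_lt_mk.2 (by omega))).ne
      (by
        simp only [mem_image, mem_univ, true_and, forall_exists_index, forall_apply_eq_imp_iff]
        exact fun i m => ⟨prefixSum_le_of_sortedPair_chain hchain
          (Fin.le_def.2 (Nat.le_sub_one_of_lt i.2)) m,
          prefixSum_le_of_sortedPair_chain hchain (Fin.le_def.2 (Nat.zero_le _)) m⟩)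
      (fun m => (sortedPair_iff.1 (hchain _ _ (Fin.mk_lt_mk.2 (by omega))) m).2)
  obtain ⟨t, ht⟩ : ∃ t, sigSet (A ⟨0, by omega⟩) (A ⟨1, by omega⟩) = {t} := by
    obtain ⟨k, rfl⟩ : ∃ k, n = k + 1 := ⟨n - 1, by omega⟩
    exact card_eq_one.1 (card_sigSet_castSucc_succ A (fun i => (hmax.1.1 (hmem i)).1) hchain
      (fun i j h => (hdec i j h).ne) ⟨0, by omega⟩)
  exact isMaxClique_appendShift (by omega) hdec hmax ha' hlast hsort hcover ht hΔ
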